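/- Let D be a locally nilpotent ℂ-derivation of ℂ[X_1, …, X_n] and let d := min{m ∈ ℕ : D^[m](X_i) = 0 for all i = 1, …, n}. Then for every polynomial p ∈ ℂ[T], one has [for all j, Σ_m (coeff of T^m in p) · exp(mD)(X_j) = 0] if and only if (T − 1)^d divides p. In other words, the minimal polynomial of the exponential automorphism F = (exp(D)(X_1), …, exp(D)(X_n)) is μ_F(T) = (T − 1)^d. -/

import Mathlib

/-!
Since `D^[d]` kills every `X_j`, `exp(mD)(X_j) = Σ_{i<d} (m^i / i!) D^[i](X_j)`, so
`Σ_m p_m exp(mD)(X_j) = Σ_{i<d} (S_i / i!) D^[i](X_j)` with the moments `S_i = Σ_m p_m m^i`.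
By minimality of `d`, the tuples `(D^[i] X_j)_j` for `i < d` are linearly independent, so `p`
annihilates `F` iff `S_i = 0` for all `i < d`. The functional `r ↦ Σ_m p_m r(m)` sends `X^i` to
`S_i` and the falling factorial of degree `k` to `p^{(k)}(1)`; both families span the polynomials
of degree `< d`, so this is equivalent to `p^{(k)}(1) = 0` for `k < d`, i.e. to `(T - 1)^d ∣ p`.
-/

open Classical in
/-- The exponential `exp(D)(a) = Σ_{i=0}^{∞} (1/i!) • D^[i](a)` of a derivation `D`;
for each `a` on which `D` is eventually nilpotent this is the (finite) sum of all
possibly nonzero terms. -/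
noncomputable def expMap (k : Type*) {A : Type*} [Field k] [CharZero k] [CommRing A]
    [Algebra k A] (D : Derivation k A A) (a : A) : A :=
  if h : ∃ n : ℕ, (⇑D)^[n] a = 0 then
    ∑ i ∈ Finset.range (Nat.find h), ((Nat.factorial i : k)⁻¹) • (⇑D)^[i] a
  else a

theorem Function.iterate_eq_zero_of_le {M : Type*} [Zero M] {f : M → M} (hf : f 0 = 0) {a : M}
    {N i : ℕ} (hN : f^[N] a = 0) (hi : N ≤ i) : f^[i] a = 0 := by
  rw [← Nat.sub_add_cancel hi, Function.iterate_add_apply, hN, Function.iterate_fixed hf]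

theorem Derivation.iterate_nsmul_apply {R B : Type*} [CommSemiring R] [CommSemiring B]
    [Algebra R B] (D : Derivation R B B) (m i : ℕ) (a : B) :
    (⇑(m • D))^[i] a = m ^ i • (⇑D)^[i] a := by
  rw [← Derivation.coeFn_coe, Derivation.coe_smul_linearMap, ← Module.End.coe_pow, smul_pow,
    LinearMap.smul_apply, Module.End.coe_pow, Derivation.coeFn_coe]

theorem LinearMap.compLeft_pow_apply {R M : Type*} [Semiring R] [AddCommMonoid M] [Module R M]
    (f : Module.End R M) (I : Type*) (i : ℕ) (g : I → M) :
    (f.compLeft I ^ i) g = fun j => (f ^ i) (g j) := by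
  induction i with
  | zero => rfl
  | succ i ih =>
    rw [pow_succ', Module.End.mul_apply, ih]
    funext j
    rw [pow_succ', Module.End.mul_apply]
    rfl

theorem Module.End.linearIndependent_pow_apply {K M : Type*} [Field K] [AddCommGroup M]
    [Module K M] (f : Module.End K M) {v : M} {d : ℕ} (hd : (f ^ d) v = 0)
    (hmin : ∀ m, (f ^ m) v = 0 → d ≤ m) :
    LinearIndependent K fun i : Fin d => (f ^ (i : ℕ)) v := by
  have hvanish {m : ℕ} (hm : d ≤ m) : (f ^ m) v = 0 := by
    rw [← Nat.sub_add_cancel hm, pow_add, Module.End.mul_apply, hd, map_zero]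
  rw [Fintype.linearIndependent_iff]
  intro c hc i
  induction i using WellFoundedLT.induction with
  | _ i ih =>
    have hi := i.isLt
    -- applying `f ^ (d - 1 - i)` kills every term of index above `i`
    have hshift := congr_arg (f ^ (d - 1 - i)) hc
    rw [map_sum, map_zero, Finset.sum_eq_single i] at hshift
    · rw [map_smul, ← Module.End.mul_apply, ← pow_add, Nat.sub_add_cancel (by omega)] at hshift
      exact (smul_eq_zero.1 hshift).resolve_right fun h => by have := hmin _ h; omega
    · intro s _ hsi
      rcases lt_or_gt_of_ne hsi with hlt | hgt
      · rw [ih s hlt, zero_smul, map_zero]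
      · rw [map_smul, ← Module.End.mul_apply, ← pow_add, hvanish (by omega), smul_zero]
    · simp

namespace Polynomial

theorem X_sub_C_pow_dvd_iff_forall_eval_iterate_derivative {R : Type*} [CommRing R] [IsDomain R]
    [CharZero R] {p : R[X]} {t : R} {d : ℕ} :
    (X - C t) ^ d ∣ p ↔ ∀ k < d, (derivative^[k] p).eval t = 0 := by
  have htaylor : taylor t (X - C t) = X := by simp [taylor_X, taylor_C]
  rw [← map_dvd_iff (taylorEquiv t), map_pow]
  change (taylor t (X - C t)) ^ d ∣ taylor t p ↔ _
  rw [htaylor, X_pow_dvd_iff]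
  refine forall₂_congr fun k _ => ?_
  rw [taylor_coeff, ← factorial_smul_hasseDeriv, LinearMap.smul_apply, eval_smul, nsmul_eq_mul,
    mul_eq_zero, or_iff_right (Nat.cast_ne_zero.2 k.factorial_ne_zero)]

theorem eval_one_iterate_derivative_eq_sum {R : Type*} [CommRing R] (p : R[X]) (k : ℕ) :
    (derivative^[k] p).eval 1 =
      ∑ m ∈ Finset.range (p.natDegree + 1), p.coeff m * (descPochhammer R k).eval (m : R) := by
  conv_lhs => rw [p.as_sum_range' _ p.natDegree.lt_succ_self]
  simp only [iterate_derivative_sum, eval_finsetSum, ← C_mul_X_pow_eq_monomial,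
    iterate_derivative_C_mul, iterate_derivative_X_pow_eq_C_mul, eval_mul, eval_C, eval_pow, eval_X,
    one_pow, mul_one, descPochhammer_eval_eq_descFactorial]

theorem Sequence.forall_lt_map_eq_zero_iff {K M : Type*} [Field K] [AddCommGroup M] [Module K M]
    (S : Sequence K) (φ : K[X] →ₗ[K] M) (d : ℕ) :
    (∀ i < d, φ (S i) = 0) ↔ degreeLT K d ≤ LinearMap.ker φ := by
  rw [← S.span_degreeLT fun i _ => (leadingCoeff_ne_zero.2 (S.ne_zero i)).isUnit,
    Submodule.span_le, Set.image_subset_iff]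
  rfl

theorem forall_sum_coeff_mul_natCast_pow_eq_zero_iff {K : Type*} [Field K] [CharZero K]
    (p : K[X]) (d : ℕ) :
    (∀ i < d, ∑ m ∈ Finset.range (p.natDegree + 1), p.coeff m * (m : K) ^ i = 0) ↔
      (X - 1) ^ d ∣ p := by
  let φ : K[X] →ₗ[K] K := ∑ m ∈ Finset.range (p.natDegree + 1), p.coeff m • leval (m : K)
  have hφ (r : K[X]) : φ r = ∑ m ∈ Finset.range (p.natDegree + 1), p.coeff m * r.eval (m : K) := by
    simp [φ]
  let monomials : Sequence K := ⟨fun i => X ^ i, by simp⟩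
  let fallingFactorials : Sequence K :=
    ⟨descPochhammer K, fun i => by
      rw [degree_eq_natDegree (monic_descPochhammer K i).ne_zero, descPochhammer_natDegree]⟩
  calc (∀ i < d, ∑ m ∈ Finset.range (p.natDegree + 1), p.coeff m * (m : K) ^ i = 0)
      ↔ ∀ i < d, φ (monomials i) = 0 := by simp [hφ, monomials]
    _ ↔ ∀ k < d, φ (fallingFactorials k) = 0 := by
      rw [monomials.forall_lt_map_eq_zero_iff, fallingFactorials.forall_lt_map_eq_zero_iff]
    _ ↔ ∀ k < d, (derivative^[k] p).eval 1 = 0 := by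
      simp [hφ, fallingFactorials, eval_one_iterate_derivative_eq_sum]
    _ ↔ (X - 1) ^ d ∣ p := by
      rw [← C_1, X_sub_C_pow_dvd_iff_forall_eval_iterate_derivative]

end Polynomial

section expMap

variable {k A : Type*} [Field k] [CharZero k] [CommRing A] [Algebra k A]

theorem expMap_eq_sum_range (D : Derivation k A A) {a : A} {N : ℕ} (hN : (⇑D)^[N] a = 0) :
    expMap k D a = ∑ i ∈ Finset.range N, ((i.factorial : k)⁻¹) • (⇑D)^[i] a := by
  classical
  have h : ∃ n : ℕ, (⇑D)^[n] a = 0 := ⟨N, hN⟩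
  rw [expMap, dif_pos h]
  refine Finset.sum_subset (Finset.range_subset_range.2 (Nat.find_min' h hN)) fun i _ hi => ?_
  rw [Function.iterate_eq_zero_of_le (map_zero D) (Nat.find_spec h) (by simpa using hi),
    smul_zero]

theorem expMap_nsmul_eq_sum_range (D : Derivation k A A) {a : A} {d : ℕ} (hd : (⇑D)^[d] a = 0)
    (m : ℕ) :
    expMap k (m • D) a = ∑ i ∈ Finset.range d, ((m : k) ^ i / i.factorial) • (⇑D)^[i] a := by
  rw [expMap_eq_sum_range (m • D) (N := d) (by rw [D.iterate_nsmul_apply, hd, smul_zero])]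
  refine Finset.sum_congr rfl fun i _ => ?_
  rw [D.iterate_nsmul_apply, ← Nat.cast_smul_eq_nsmul k, smul_smul, Nat.cast_pow, div_eq_inv_mul]

theorem sum_coeff_smul_expMap_nsmul (D : Derivation k A A) {a : A} {d : ℕ}
    (hd : (⇑D)^[d] a = 0) (p : Polynomial k) :
    ∑ m ∈ Finset.range (p.natDegree + 1), p.coeff m • expMap k (m • D) a =
      ∑ i ∈ Finset.range d,
        ((∑ m ∈ Finset.range (p.natDegree + 1), p.coeff m * (m : k) ^ i) / i.factorial) •
          (⇑D)^[i] a := by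
  simp only [expMap_nsmul_eq_sum_range D hd, Finset.smul_sum, smul_smul, Finset.sum_div,
    Finset.sum_smul]
  rw [Finset.sum_comm]
  simp only [mul_div_assoc]

end expMap

open MvPolynomial in
theorem exp_automorphism_minimal_polynomial_general
    (n : ℕ) (D : Derivation ℂ (MvPolynomial (Fin n) ℂ) (MvPolynomial (Fin n) ℂ))
    (d : ℕ) (hd : ∀ i : Fin n, (⇑D)^[d] (X i) = 0)
    (hmin : ∀ m : ℕ, (∀ i : Fin n, (⇑D)^[m] (X i) = 0) → d ≤ m) :
    ∀ p : Polynomial ℂ,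
      (∀ j : Fin n,
          ∑ m ∈ Finset.range (p.natDegree + 1),
            p.coeff m • expMap ℂ (m • D) (X j) = 0)
        ↔ (Polynomial.X - 1) ^ d ∣ p := by
  intro p
  let DPi := (D : MvPolynomial (Fin n) ℂ →ₗ[ℂ] MvPolynomial (Fin n) ℂ).compLeft (Fin n)
  have hDPi (i : ℕ) : (DPi ^ i) (fun j => X j) = fun j => (⇑D)^[i] (X j) := by
    exact (LinearMap.compLeft_pow_apply _ _ i _).trans
      (by simp only [Module.End.pow_apply, Derivation.coeFn_coe])
  have hindep := Module.End.linearIndependent_pow_apply DPi (v := fun j => X j)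
    (by rw [hDPi]; exact funext hd) fun m hm => hmin m (congr_fun (hDPi m ▸ hm))
  have hsum (c : ℕ → ℂ) : ∑ i : Fin d, c i • (DPi ^ (i : ℕ)) (fun j => X j) =
      fun j => ∑ i ∈ Finset.range d, c i • (⇑D)^[i] (X j) := by
    funext j
    simp only [hDPi, Finset.sum_apply, Pi.smul_apply]
    exact Fin.sum_univ_eq_sum_range (fun i => c i • (⇑D)^[i] (X j)) d
  simp only [sum_coeff_smul_expMap_nsmul D (hd _) p]
  rw [← Polynomial.forall_sum_coeff_mul_natCast_pow_eq_zero_iff]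
  constructor
  · intro h i hi
    have := Fintype.linearIndependent_iff.1 hindep _ ((hsum _).trans (funext h)) ⟨i, hi⟩
    simpa [Nat.factorial_ne_zero] using this
  · intro h j
    exact Finset.sum_eq_zero fun i hi => by rw [h i (Finset.mem_range.1 hi), zero_div, zero_smul]

open MvPolynomial in
/-- Main theorem: if `D` is a locally nilpotent derivation of `ℂ[X_1,…,X_n]` and `d` is
the least `m` with `D^[m](X_i) = 0` for all `i`, then a polynomial `p ∈ ℂ[T]` annihilates
the exponential automorphism `F` (i.e. `Σ_m (coeff m p) • exp(mD)(X_j) = 0` for all `j`,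
where `(F^[m])_j = exp(mD)(X_j)`) if and only if `(T − 1)^d ∣ p`; that is, the minimal
polynomial of `F` is `(T − 1)^d`. -/
theorem exp_automorphism_minimal_polynomial
    (n : ℕ) (D : Derivation ℂ (MvPolynomial (Fin n) ℂ) (MvPolynomial (Fin n) ℂ))
    (hD : ∀ a : MvPolynomial (Fin n) ℂ, ∃ m : ℕ, (⇑D)^[m] a = 0)
    (d : ℕ) (hd : ∀ i : Fin n, (⇑D)^[d] (X i) = 0)
    (hmin : ∀ m : ℕ, (∀ i : Fin n, (⇑D)^[m] (X i) = 0) → d ≤ m) :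
    ∀ p : Polynomial ℂ,
      (∀ j : Fin n,
          ∑ m ∈ Finset.range (p.natDegree + 1),
            p.coeff m • expMap ℂ (m • D) (X j) = 0)
        ↔ (Polynomial.X - 1) ^ d ∣ p :=
  exp_automorphism_minimal_polynomial_general n D d hd hmin
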